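/- (Hard direction of the main theorem, in the combinatorial form actually proved.) Let d ≥ 1 and let L be a finite abstract simplicial complex of dimension 2d satisfying f_L(-1/2) = 0, and write h_L(t) = (1+t) · h̃_L(t). Assume that for every vertex v of L the Charney–Davis quantity of its link is nonnegative: (-1)^d · f_{Lk_L(v)}(-1/2) ≥ 0. Then (-1)^d · h̃_L(-1) ≥ 0. -/

import Mathlib

open Polynomial

/-- A finite abstract simplicial complex on the vertex type `V`: a nonempty
finite collection of finite subsets of `V` closed under taking subsets. -/
def IsSimplicialComplex {V : Type*} [DecidableEq V] (L : Finset (Finset V)) : Prop :=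
  L.Nonempty ∧ ∀ σ ∈ L, ∀ τ ⊆ σ, τ ∈ L

/-- The f-polynomial `f_L(t) = Σ_{σ ∈ L} t^{|σ|}`. -/
noncomputable def fPoly {V : Type*} [DecidableEq V] (L : Finset (Finset V)) : ℝ[X] :=
  ∑ σ ∈ L, X ^ σ.card

/-- The h-polynomial (with parameter `n`, for a complex of dimension `n - 1`):
`h_L(t) = Σ_{σ ∈ L} t^{|σ|} (1 - t)^{n - |σ|}`. -/
noncomputable def hPoly {V : Type*} [DecidableEq V] (n : ℕ) (L : Finset (Finset V)) : ℝ[X] :=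
  ∑ σ ∈ L, X ^ σ.card * (1 - X) ^ (n - σ.card)

/-- The link of a vertex `v`: `Lk_L(v) = { σ ∈ L : v ∉ σ and σ ∪ {v} ∈ L }`. -/
def link {V : Type*} [DecidableEq V] (L : Finset (Finset V)) (v : V) : Finset (Finset V) :=
  L.filter (fun σ => v ∉ σ ∧ insert v σ ∈ L)

/-! With `n = 2d + 1` one has `h_L(t) = (1 - t)^n f_L(t / (1 - t))`, so differentiating at `t = -1`
gives `h̃_L(-1) = h_L'(-1) = 2^(n-2) (f_L'(-1/2) - 2n f_L(-1/2)) = 2^(n-2) f_L'(-1/2)`.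
Removing `v` from the faces containing it is a bijection onto `Lk_L(v)`, whence
`f_L' = Σ_v f_{Lk_L(v)}`; so `(-1)^d h̃_L(-1)` is a positive multiple of the sum of the
Charney–Davis quantities of the vertex links. -/

theorem eval_neg_one_eq_of_eq_one_add_X_mul {R : Type*} [CommRing R] {p q : R[X]}
    (h : p = (1 + X) * q) : q.eval (-1) = (derivative p).eval (-1) := by
  simp [h, derivative_mul]

-- `2 ^ (a + k) / 4` stands for `2 ^ (a + k - 2)`, avoiding truncated subtraction when `a + k < 2`.
theorem eval_derivative_X_pow_mul_one_sub_X_pow (a k : ℕ) :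
    (derivative ((X : ℝ[X]) ^ a * (1 - X) ^ k)).eval (-1)
      = 2 ^ (a + k) * ((derivative (X ^ a : ℝ[X])).eval (-1 / 2) / 4
        - (a + k) / 2 * (-1 / 2) ^ a) := by
  rcases a with _ | a <;> rcases k with _ | k <;>
    simp [derivative_mul, derivative_pow_succ, div_pow] <;>
    field_simp <;> ring

section SimplicialComplex

variable {V : Type*} [DecidableEq V] {L : Finset (Finset V)}

theorem image_insert_link (hL : ∀ σ ∈ L, ∀ τ ⊆ σ, τ ∈ L) (v : V) :
    (link L v).image (insert v) = L.filter (v ∈ ·) := by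
  ext σ
  simp only [link, Finset.mem_image, Finset.mem_filter]
  constructor
  · rintro ⟨τ, ⟨-, -, hτ⟩, rfl⟩
    exact ⟨hτ, Finset.mem_insert_self v τ⟩
  · rintro ⟨hσ, hv⟩
    have hσ' : insert v (σ.erase v) = σ := Finset.insert_erase hv
    refine ⟨σ.erase v, ⟨hL σ hσ _ (Finset.erase_subset v σ), Finset.notMem_erase v σ, ?_⟩,
      hσ'⟩
    rwa [hσ']

theorem fPoly_link (hL : ∀ σ ∈ L, ∀ τ ⊆ σ, τ ∈ L) (v : V) :
    fPoly (link L v) = ∑ σ ∈ L with v ∈ σ, X ^ (σ.card - 1) := by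
  have hinj : Set.InjOn (insert v) (link L v : Set (Finset V)) := fun τ hτ τ' hτ' h => by
    simp only [link, Finset.coe_filter, Set.mem_ofPred_eq] at hτ hτ'
    rw [← Finset.erase_insert hτ.2.1, h, Finset.erase_insert hτ'.2.1]
  rw [← image_insert_link hL, Finset.sum_image hinj, fPoly]
  refine Finset.sum_congr rfl fun τ hτ => ?_
  rw [Finset.card_insert_of_notMem (Finset.mem_filter.1 hτ).2.1, Nat.add_sub_cancel]

theorem derivative_fPoly (hL : ∀ σ ∈ L, ∀ τ ⊆ σ, τ ∈ L) :
    derivative (fPoly L) = ∑ v ∈ L.biUnion id, fPoly (link L v) := by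
  calc derivative (fPoly L) = ∑ σ ∈ L, ∑ _v ∈ σ, (X : ℝ[X]) ^ (σ.card - 1) := by
        simp [fPoly, derivative_X_pow]
    _ = ∑ v ∈ L.biUnion id, ∑ σ ∈ L with v ∈ σ, X ^ (σ.card - 1) :=
        Finset.sum_comm' fun σ v => by
          rw [Finset.mem_filter]
          exact ⟨fun h => ⟨h, Finset.mem_biUnion.2 ⟨σ, h⟩⟩, And.left⟩
    _ = _ := Finset.sum_congr rfl fun v _ => (fPoly_link hL v).symm

theorem eval_derivative_hPoly {n : ℕ} (hcard : ∀ σ ∈ L, σ.card ≤ n) :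
    (derivative (hPoly n L)).eval (-1)
      = 2 ^ n * ((derivative (fPoly L)).eval (-1 / 2) / 4 - n / 2 * (fPoly L).eval (-1 / 2)) := by
  simp only [hPoly, fPoly, derivative_sum, eval_finsetSum, eval_pow, eval_X, Finset.mul_sum]
  rw [Finset.sum_div, ← Finset.sum_sub_distrib, Finset.mul_sum]
  refine Finset.sum_congr rfl fun σ hσ => ?_
  rw [eval_derivative_X_pow_mul_one_sub_X_pow, Nat.add_sub_cancel' (hcard σ hσ),
    Nat.cast_sub (hcard σ hσ)]
  ring

end SimplicialComplex

theorem charney_davis_even_general {V : Type*} [DecidableEq V] (d : ℕ)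
    (L : Finset (Finset V)) (hL : IsSimplicialComplex L)
    (hdim : (∀ σ ∈ L, σ.card ≤ 2 * d + 1) ∧ ∃ σ ∈ L, σ.card = 2 * d + 1)
    (hf : (fPoly L).eval (-1/2) = 0)
    (htilde : ℝ[X]) (hfac : hPoly (2 * d + 1) L = (1 + X) * htilde)
    (hCD : ∀ v : V, ({v} : Finset V) ∈ L →
      0 ≤ (-1 : ℝ) ^ d * (fPoly (link L v)).eval (-1/2)) :
    0 ≤ (-1 : ℝ) ^ d * htilde.eval (-1) := by
  have htilde_eval : htilde.eval (-1)
      = 2 ^ (2 * d + 1) / 4 * ∑ v ∈ L.biUnion id, (fPoly (link L v)).eval (-1 / 2) := by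
    rw [eval_neg_one_eq_of_eq_one_add_X_mul hfac, eval_derivative_hPoly hdim.1, hf,
      derivative_fPoly hL.2, eval_finsetSum]
    ring
  rw [htilde_eval, mul_left_comm, Finset.mul_sum]
  refine mul_nonneg (by positivity) (Finset.sum_nonneg fun v hv => hCD v ?_)
  obtain ⟨σ, hσ, hvσ⟩ := Finset.mem_biUnion.1 hv
  exact hL.2 σ hσ {v} (Finset.singleton_subset_iff.2 hvσ)

/-- Hard direction of the main theorem of the paper, in its combinatorial form:
let `d ≥ 1` and let `L` be a finite simplicial complex of dimension `2d` with
`f_L(-1/2) = 0`, and write `h_L(t) = (1 + t) · h̃_L(t)`. If every vertex `v` of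
`L` satisfies the Charney–Davis inequality for its link,
`(-1)^d · f_{Lk_L(v)}(-1/2) ≥ 0`, then `(-1)^d · h̃_L(-1) ≥ 0`. -/
theorem charney_davis_even {V : Type*} [DecidableEq V] (d : ℕ) (hd : 1 ≤ d)
    (L : Finset (Finset V)) (hL : IsSimplicialComplex L)
    (hdim : (∀ σ ∈ L, σ.card ≤ 2 * d + 1) ∧ ∃ σ ∈ L, σ.card = 2 * d + 1)
    (hf : (fPoly L).eval (-1/2) = 0)
    (htilde : ℝ[X]) (hfac : hPoly (2 * d + 1) L = (1 + X) * htilde)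
    (hCD : ∀ v : V, ({v} : Finset V) ∈ L →
      0 ≤ (-1 : ℝ) ^ d * (fPoly (link L v)).eval (-1/2)) :
    0 ≤ (-1 : ℝ) ^ d * htilde.eval (-1) :=
  charney_davis_even_general d L hL hdim hf htilde hfac hCD
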